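/- Let m ≥ 1, let A₀ ∈ ℝ^{2m×2m} be a fixed matrix, and let β ∈ ℝ. For v = (v₁; v₂) ∈ ℝ^{2m} with v ≠ 0 (v₁, v₂ ∈ ℝ^m), define B(v) := blockdiag(D(v), D(v)) where D(v) := diag(v₁)² + diag(v₂)², and define A(v) := A₀ + (β/(vᵀv)) B(v). Then the Jacobian J(v) of the map v ↦ A(v)v at v equals A₀ + (β/(vᵀv)) [ [3·diag(v₁)² + diag(v₂)², 2·diag(v₁)·diag(v₂)], [2·diag(v₁)·diag(v₂), diag(v₁)² + 3·diag(v₂)²] ] − (2β/(vᵀv)²) (B(v)v) vᵀ. -/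

import Mathlib

/-!
Split `A(v) v = A₀ v + (β / ⟪v, v⟫) • B(v) v`. With `k̄ := k.swap` the partner index
(real part ↔ imaginary part), the cubic map `B(v) v` has components `(v_k² + v_k̄²) v_k`, whose
Jacobian is the block matrix in `J(v)`. The product rule with
`d(⟪v, v⟫⁻¹) = -2 ⟪v, ·⟫ / ⟪v, v⟫²` contributes the rank-one term `(B(v) v) vᵀ`.
-/

open Matrix
open scoped RealInnerProductSpace

noncomputable def mvCLM {ι : Type*} [Fintype ι] [DecidableEq ι] (M : Matrix ι ι ℝ) :
    EuclideanSpace ℝ ι →L[ℝ] EuclideanSpace ℝ ι :=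
  LinearMap.toContinuousLinearMap (Matrix.toEuclideanLin M)

/-- `D(v) = diag(v₁)² + diag(v₂)²`. -/
noncomputable def gpeD {m : ℕ} (v : EuclideanSpace ℝ (Fin m ⊕ Fin m)) :
    Matrix (Fin m) (Fin m) ℝ :=
  (Matrix.diagonal fun i => v (Sum.inl i)) ^ 2 + (Matrix.diagonal fun i => v (Sum.inr i)) ^ 2

/-- `B(v) = blockdiag(D(v), D(v))`. -/
noncomputable def gpeB {m : ℕ} (v : EuclideanSpace ℝ (Fin m ⊕ Fin m)) :
    Matrix (Fin m ⊕ Fin m) (Fin m ⊕ Fin m) ℝ :=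
  Matrix.fromBlocks (gpeD v) 0 0 (gpeD v)

/-- `A(v) = A₀ + (β/(vᵀv)) B(v)`. -/
noncomputable def gpeA {m : ℕ} (A₀ : Matrix (Fin m ⊕ Fin m) (Fin m ⊕ Fin m) ℝ) (β : ℝ)
    (v : EuclideanSpace ℝ (Fin m ⊕ Fin m)) :
    Matrix (Fin m ⊕ Fin m) (Fin m ⊕ Fin m) ℝ :=
  A₀ + (β / ⟪v, v⟫) • gpeB v

/-- The claimed Jacobian of `v ↦ A(v)v` for the real-form Gross–Pitaevskii problem. -/
noncomputable def gpeJ {m : ℕ} (A₀ : Matrix (Fin m ⊕ Fin m) (Fin m ⊕ Fin m) ℝ) (β : ℝ)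
    (v : EuclideanSpace ℝ (Fin m ⊕ Fin m)) :
    Matrix (Fin m ⊕ Fin m) (Fin m ⊕ Fin m) ℝ :=
  A₀ + (β / ⟪v, v⟫) • Matrix.fromBlocks
      ((3 : ℝ) • (Matrix.diagonal fun i => v (Sum.inl i)) ^ 2 +
        (Matrix.diagonal fun i => v (Sum.inr i)) ^ 2)
      ((2 : ℝ) • ((Matrix.diagonal fun i => v (Sum.inl i)) *
        (Matrix.diagonal fun i => v (Sum.inr i))))
      ((2 : ℝ) • ((Matrix.diagonal fun i => v (Sum.inl i)) *
        (Matrix.diagonal fun i => v (Sum.inr i))))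
      ((Matrix.diagonal fun i => v (Sum.inl i)) ^ 2 +
        (3 : ℝ) • (Matrix.diagonal fun i => v (Sum.inr i)) ^ 2)
    - (2 * β / ⟪v, v⟫ ^ 2) • Matrix.vecMulVec ((gpeB v).mulVec fun i => v i) (fun i => v i)

section mvCLM

variable {ι : Type*} [Fintype ι] [DecidableEq ι]

lemma mvCLM_apply (M : Matrix ι ι ℝ) (x : EuclideanSpace ℝ ι) (i : ι) :
    mvCLM M x i = (M *ᵥ x.ofLp) i := rfl

lemma mvCLM_add (M N : Matrix ι ι ℝ) : mvCLM (M + N) = mvCLM M + mvCLM N := by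
  simp [mvCLM]

lemma mvCLM_sub (M N : Matrix ι ι ℝ) : mvCLM (M - N) = mvCLM M - mvCLM N := by
  simp [mvCLM]

lemma mvCLM_smul (c : ℝ) (M : Matrix ι ι ℝ) : mvCLM (c • M) = c • mvCLM M := by
  simp [mvCLM]

lemma mvCLM_vecMulVec (a b : EuclideanSpace ℝ ι) :
    mvCLM (vecMulVec a.ofLp b.ofLp) = (innerSL ℝ b).smulRight a := by
  ext x i
  simp [mvCLM_apply, vecMulVec_mulVec, PiLp.inner_apply, dotProduct, mul_comm]

end mvCLM

lemma hasFDerivAt_inv_inner_self {E : Type*} [NormedAddCommGroup E] [InnerProductSpace ℝ E]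
    {v : E} (hv : v ≠ 0) :
    HasFDerivAt (fun w : E => ⟪w, w⟫⁻¹) (-(2 / ⟪v, v⟫ ^ 2) • innerSL ℝ v) v := by
  simp only [real_inner_self_eq_norm_sq]
  have hv' : ‖v‖ ^ 2 ≠ 0 := by positivity
  refine ((hasDerivAt_inv hv').comp_hasFDerivAt v
    (hasStrictFDerivAt_norm_sq v).hasFDerivAt).congr_fderiv ?_
  ext x
  simp only [neg_smul, _root_.neg_apply, _root_.smul_apply, coe_innerSL_apply, nsmul_eq_mul,
    Nat.cast_ofNat, smul_eq_mul, div_eq_mul_inv, neg_inj]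
  ring

section GrossPitaevskii

variable {m : ℕ}

noncomputable def gpeJB (v : EuclideanSpace ℝ (Fin m ⊕ Fin m)) :
    Matrix (Fin m ⊕ Fin m) (Fin m ⊕ Fin m) ℝ :=
  fromBlocks
    ((3 : ℝ) • (diagonal fun i => v (Sum.inl i)) ^ 2 + (diagonal fun i => v (Sum.inr i)) ^ 2)
    ((2 : ℝ) • ((diagonal fun i => v (Sum.inl i)) * (diagonal fun i => v (Sum.inr i))))
    ((2 : ℝ) • ((diagonal fun i => v (Sum.inl i)) * (diagonal fun i => v (Sum.inr i))))
    ((diagonal fun i => v (Sum.inl i)) ^ 2 + (3 : ℝ) • (diagonal fun i => v (Sum.inr i)) ^ 2)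

lemma gpeJ_eq (A₀ : Matrix (Fin m ⊕ Fin m) (Fin m ⊕ Fin m) ℝ) (β : ℝ)
    (v : EuclideanSpace ℝ (Fin m ⊕ Fin m)) :
    gpeJ A₀ β v = A₀ + (β / ⟪v, v⟫) • gpeJB v
      - (2 * β / ⟪v, v⟫ ^ 2) • vecMulVec (mvCLM (gpeB v) v).ofLp v.ofLp :=
  rfl

lemma gpeB_mulVec_apply (v : EuclideanSpace ℝ (Fin m ⊕ Fin m)) (x : Fin m ⊕ Fin m → ℝ)
    (k : Fin m ⊕ Fin m) :
    (gpeB v *ᵥ x) k = (v k ^ 2 + v k.swap ^ 2) * x k := by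
  cases k <;> simp [gpeB, gpeD, diagonal_pow, diagonal_add, mulVec_diagonal, add_comm]

lemma gpeJB_mulVec_apply (v : EuclideanSpace ℝ (Fin m ⊕ Fin m)) (x : Fin m ⊕ Fin m → ℝ)
    (k : Fin m ⊕ Fin m) :
    (gpeJB v *ᵥ x) k =
      (3 * v k ^ 2 + v k.swap ^ 2) * x k + 2 * v k * v k.swap * x k.swap := by
  cases k <;>
  simp only [gpeJB, diagonal_pow, ← diagonal_smul, diagonal_add, diagonal_mul_diagonal,
    fromBlocks_mulVec, Sum.elim_inl, Sum.elim_inr, Sum.swap_inl, Sum.swap_inr, Pi.add_apply,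
    mulVec_diagonal, Function.comp_apply, Pi.pow_apply, Pi.smul_apply, smul_eq_mul] <;>
  ring

lemma hasFDerivAt_gpeB_mulVec_self (v : EuclideanSpace ℝ (Fin m ⊕ Fin m)) :
    HasFDerivAt (fun w => mvCLM (gpeB w) w) (mvCLM (gpeJB v)) v := by
  rw [← hasFDerivWithinAt_univ, hasFDerivWithinAt_piLp]
  intro k
  have hcoord := PiLp.hasFDerivAt_apply (𝕜 := ℝ) 2 v
  simp only [mvCLM_apply, gpeB_mulVec_apply]
  refine ((((hcoord k).pow 2).add ((hcoord k.swap).pow 2)).mul (hcoord k)).hasFDerivWithinAt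
    |>.congr_fderiv ?_
  ext u
  simp only [Pi.add_apply, Nat.add_one_sub_one, pow_one, nsmul_eq_mul, Nat.cast_ofNat, smul_add,
    _root_.add_apply, _root_.smul_apply, PiLp.proj_apply, smul_eq_mul,
    ContinuousLinearMap.comp_apply, mvCLM_apply, gpeJB_mulVec_apply]
  ring

end GrossPitaevskii

theorem stmt18_general {m : ℕ}
    (A₀ : Matrix (Fin m ⊕ Fin m) (Fin m ⊕ Fin m) ℝ) (β : ℝ)
    (v : EuclideanSpace ℝ (Fin m ⊕ Fin m)) (hv : v ≠ 0) :
    HasFDerivAt (fun w => mvCLM (gpeA A₀ β w) w) (mvCLM (gpeJ A₀ β v)) v := by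
  have hsplit : (fun w => mvCLM (gpeA A₀ β w) w) =
      fun w => mvCLM A₀ w + (β * ⟪w, w⟫⁻¹) • mvCLM (gpeB w) w := by
    funext w
    simp [gpeA, mvCLM_add, mvCLM_smul, div_eq_mul_inv]
  rw [hsplit]
  refine ((mvCLM A₀).hasFDerivAt.add
    (((hasFDerivAt_inv_inner_self hv).const_mul β).smul (hasFDerivAt_gpeB_mulVec_self v)))
    |>.congr_fderiv ?_
  rw [gpeJ_eq, mvCLM_sub, mvCLM_add, mvCLM_smul, mvCLM_smul, mvCLM_vecMulVec]
  ext u k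
  simp only [div_eq_mul_inv, neg_smul, smul_neg, _root_.add_apply, _root_.smul_apply,
    ContinuousLinearMap.smulRight_apply, _root_.neg_apply, coe_innerSL_apply, smul_eq_mul,
    PiLp.add_apply, PiLp.smul_apply, PiLp.neg_apply, _root_.sub_apply, PiLp.sub_apply]
  ring

/-- For the real-form Gross–Pitaevskii matrix family
`A(v) = A₀ + (β/(vᵀv)) B(v)`, the Jacobian of `v ↦ A(v)v` at `v ≠ 0` is given by the
explicit formula `gpeJ`. -/
theorem stmt18 {m : ℕ} (hm : 1 ≤ m)
    (A₀ : Matrix (Fin m ⊕ Fin m) (Fin m ⊕ Fin m) ℝ) (β : ℝ)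
    (v : EuclideanSpace ℝ (Fin m ⊕ Fin m)) (hv : v ≠ 0) :
    HasFDerivAt (fun w => mvCLM (gpeA A₀ β w) w) (mvCLM (gpeJ A₀ β v)) v :=
  stmt18_general A₀ β v hv
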